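/- arXiv:1604.05885 — 3 statements merged into one kernel-verified Lean document; each statement's English description precedes it below -/
import Mathlib

section
/- Let p be a prime, n ≥ 2, and V = (ℤ/pℤ)ⁿ viewed as a vector space over the field with p elements. Let B be a basis of V, K = {0} × B ⊆ ℝ × V, and W = [-1,1] × {0}. Then there is no element (r, v) ∈ ℝ × V such that K ⊆ W + ℤ·(r, v). -/
/-!
A point `(0, b)` of `K` lies in `W + ℤ·(r, v)` only if `b` is an integer multiple of `v`, since
`W` has trivial second coordinate. So all basis vectors lie on the line spanned by `v`; but two distinct
linearly independent vectors cannot lie on a common line.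
-/

open Pointwise

theorem LinearIndependent.subsingleton_of_forall_mem_span_singleton {ι R M : Type*}
    [CommRing R] [Nontrivial R] [AddCommGroup M] [Module R M] {b : ι → M}
    (hb : LinearIndependent R b) {v : M} (hv : ∀ i, b i ∈ R ∙ v) : Subsingleton ι := by
  refine ⟨fun i j => by_contra fun hij => hb.ne_zero i ?_⟩
  obtain ⟨s, hs⟩ := Submodule.mem_span_singleton.1 (hv i)
  obtain ⟨t, ht⟩ := Submodule.mem_span_singleton.1 (hv j)
  have hcomb : t • b i + (-s) • b j = 0 := by
    rw [← hs, ← ht]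
    module
  obtain ⟨-, hs0⟩ := (LinearIndepOn.pair_iff b hij).1 (hb.linearIndepOn _) _ _ hcomb
  rw [← hs, neg_eq_zero.1 hs0, zero_smul]

theorem snd_mem_zmultiples_of_mem_prod_zero_add_zmultiples {A M : Type*} [AddCommGroup A]
    [AddCommGroup M] {S : Set A} {r : A} {v : M} {x : A × M}
    (hx : x ∈ S ×ˢ ({0} : Set M) + Set.range (fun k : ℤ => k • (r, v))) :
    x.2 ∈ AddSubgroup.zmultiples v := by
  obtain ⟨w, ⟨-, hw⟩, -, ⟨k, rfl⟩, rfl⟩ := hx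
  refine ⟨k, ?_⟩
  simp only [Set.mem_singleton_iff.1 hw, Prod.snd_add, Prod.smul_snd, zero_add]

/-- Let `p` be a prime, `n ≥ 2`, `V = (ℤ/pℤ)ⁿ`, `B` a basis of `V` over `ℤ/pℤ`,
`K = {0} × B ⊆ ℝ × V` and `W = [-1,1] × {0}`.  Then there is no `(r, v) ∈ ℝ × V`
with `K ⊆ W + ℤ·(r, v)`. -/
theorem no_cyclic_approximation_R_times_Zp_pow (p n : ℕ) (hp : p.Prime) (hn : 2 ≤ n)
    (B : Module.Basis (Fin n) (ZMod p) (Fin n → ZMod p)) :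
    ¬ ∃ (r : ℝ) (v : Fin n → ZMod p),
      (({0} : Set ℝ) ×ˢ Set.range ⇑B) ⊆
        ((Set.Icc (-1 : ℝ) 1) ×ˢ ({0} : Set (Fin n → ZMod p))) +
          Set.range (fun k : ℤ => k • ((r, v) : ℝ × (Fin n → ZMod p))) := by
  have := Fact.mk hp
  rintro ⟨r, v, hK⟩
  have hspan : ∀ i, B i ∈ ZMod p ∙ v := fun i => by
    obtain ⟨k, hk : k • v = B i⟩ := snd_mem_zmultiples_of_mem_prod_zero_add_zmultiples
      (hK (show ((0 : ℝ), B i) ∈ _ from ⟨rfl, i, rfl⟩))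
    exact hk ▸ zsmul_mem (Submodule.mem_span_singleton_self v) k
  have := B.linearIndependent.subsingleton_of_forall_mem_span_singleton hspan
  exact not_subsingleton_iff_nontrivial.2 (Fin.nontrivial_iff_two_le.2 hn) this
end

section
/- Let G be a locally compact group and (H_i)_{i∈I} a net of connected closed subgroups converging in the Chabauty topology to a closed subgroup H. Then H is contained in the identity component G₀ of G. -/
open Pointwise Filter

/-- Chabauty convergence of a net of closed subgroups of a locally compact group. -/
def ChabautyTendsto {G ι : Type*} [Group G] [TopologicalSpace G]
    (H : ι → Subgroup G) (l : Filter ι) (L : Subgroup G) : Prop :=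
  ∀ K : Set G, IsCompact K → ∀ W ∈ nhds (1 : G), ∀ᶠ i in l,
    (H i : Set G) ∩ K ⊆ W * (L : Set G) ∧ (L : Set G) ∩ K ⊆ W * (H i : Set G)

open Topology

theorem mem_closure_of_forall_nhds_one_mem_mul {G : Type*} [Group G] [TopologicalSpace G]
    [IsTopologicalGroup G] {s : Set G} {x : G} (h : ∀ W ∈ 𝓝 (1 : G), x ∈ W * s) :
    x ∈ closure s := by
  refine mem_closure_iff_nhds_one.2 fun U hU => ?_
  obtain ⟨w, hw, y, hy, rfl⟩ := h U⁻¹ (inv_mem_nhds_one G hU)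
  refine ⟨y, hy, ?_⟩
  simpa [div_eq_mul_inv] using hw

theorem ChabautyTendsto.subset_closure_of_eventually_subset {G ι : Type*} [Group G]
    [TopologicalSpace G] [IsTopologicalGroup G] {l : Filter ι} [l.NeBot] {H : ι → Subgroup G}
    {L : Subgroup G} (hlim : ChabautyTendsto H l L) {s : Set G}
    (hs : ∀ᶠ i in l, (H i : Set G) ⊆ s) : (L : Set G) ⊆ closure s := by
  intro x hx
  refine mem_closure_of_forall_nhds_one_mem_mul fun W hW => ?_
  obtain ⟨i, hHL, hHs⟩ := ((hlim {x} isCompact_singleton W hW).and hs).exists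
  exact Set.mul_subset_mul_left hHs (hHL.2 ⟨hx, rfl⟩)

theorem chabauty_limit_of_connected_subset_identityComponent_general
    {G ι : Type*} [Group G] [TopologicalSpace G] [IsTopologicalGroup G]
    (l : Filter ι) [l.NeBot]
    (H : ι → Subgroup G)
    (hconn : ∀ i, IsConnected (H i : Set G))
    (L : Subgroup G)
    (hlim : ChabautyTendsto H l L) :
    (L : Set G) ⊆ connectedComponent (1 : G) := by
  have hH : ∀ i, (H i : Set G) ⊆ connectedComponent 1 := fun i =>
    (hconn i).isPreconnected.subset_connectedComponent (H i).one_mem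
  simpa only [isClosed_connectedComponent.closure_eq] using
    hlim.subset_closure_of_eventually_subset (Eventually.of_forall hH)

/-- The Chabauty limit of a net of connected closed subgroups is contained in the
identity component. -/
theorem chabauty_limit_of_connected_subset_identityComponent
    {G ι : Type*} [Group G] [TopologicalSpace G] [IsTopologicalGroup G]
    [LocallyCompactSpace G] (l : Filter ι) [l.NeBot]
    (H : ι → Subgroup G) (hHc : ∀ i, IsClosed (H i : Set G))
    (hconn : ∀ i, IsConnected (H i : Set G))
    (L : Subgroup G) (hLc : IsClosed (L : Set G))
    (hlim : ChabautyTendsto H l L) :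
    (L : Set G) ⊆ connectedComponent (1 : G) :=
  chabauty_limit_of_connected_subset_identityComponent_general l H hconn L hlim
end

section
/- For each n ∈ ℕ, let Z_n = ℤ·(1/n, id_𝕋) be the cyclic subgroup of G = ℝ × b(ℤ) generated by (1/n, id_𝕋), where b(ℤ) is the Bohr compactification of ℤ identified with the dual of the discretized circle 𝕋_d, and id_𝕋 ∈ b(ℤ) is the identity character. Identify the dual Ĝ with ℝ × 𝕋_d. Then an element (r, s̄) ∈ ℝ × 𝕋_d lies in the annihilator Z_n^⊥ if and only if r/n − s ∈ ℤ, and the sequence of annihilators (Z_n^⊥)_{n∈ℕ} converges to the trivial subgroup {0} in the Chabauty topology on closed subgroups of ℝ × 𝕋_d. -/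
/-! Since `Z_n` is cyclic, `(r, s̄) ∈ Z_n^⊥` exactly when the pairing with the generator
`(1/n, id_𝕋)` vanishes, i.e. `r/n ≡ s (mod ℤ)`. A compact `K ⊆ ℝ × 𝕋_d` has bounded first
coordinates and only finitely many second coordinates, so for large `n` every `r/n` with
`(r, s̄) ∈ K` lies in a neighbourhood of `0` in `ℝ` whose image in `𝕋` meets those finitely
many `s̄` only at `0`; there `r/n ≡ s` forces `s̄ = 0` and `r/n = 0`. Thus `Z_n^⊥ ∩ K ⊆ {0}`
eventually, which is Chabauty convergence to `{0}`. -/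

open Pointwise Filter

/-- `𝕋_d`: the circle `ℝ/ℤ` with the discrete topology. -/
def Td : Type := AddCircle (1 : ℝ)

noncomputable instance : AddCommGroup Td := inferInstanceAs (AddCommGroup (AddCircle (1 : ℝ)))
instance : TopologicalSpace Td := ⊥
instance : DiscreteTopology Td := ⟨rfl⟩
instance : IsTopologicalAddGroup Td where
  continuous_add := continuous_of_discreteTopology
  continuous_neg := continuous_of_discreteTopology

/-- The identity map `𝕋_d → 𝕋`, as an additive homomorphism. -/
noncomputable def Td.toCircle : Td →+ AddCircle (1 : ℝ) :=
  AddMonoidHom.mk' (fun t => (t : AddCircle (1 : ℝ))) fun _ _ => rfl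

/-- The identity map `𝕋 → 𝕋_d`. -/
def Td.ofCircle : AddCircle (1 : ℝ) → Td := fun t => t

/-- The Bohr compactification `b(ℤ)` of `ℤ`, realized as the Pontryagin dual of `𝕋_d`. -/
abbrev BohrZ : Type _ := ContinuousAddMonoidHom Td (AddCircle (1 : ℝ))

/-- The distinguished generator `id_𝕋 ∈ b(ℤ)`: the identity character of `𝕋_d`. -/
noncomputable def idChar : BohrZ := { Td.toCircle with continuous_toFun := continuous_of_discreteTopology }

/-- `Z_n = ℤ·(1/n, id_𝕋))`, the cyclic subgroup of `ℝ × b(ℤ)` generated by `(1/n, id_𝕋)`. -/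
def Zn (n : ℕ) : Set (ℝ × BohrZ) :=
  {z | ∃ k : ℤ, z = k • (((n : ℝ)⁻¹, idChar) : ℝ × BohrZ)}

/-- The annihilator `Z_n^⊥` inside the dual `ℝ × 𝕋_d` of `ℝ × b(ℤ)`, the dual pairing
being `(r, s̄)(x, χ) = ↑(r·x) - χ(s̄)`. -/
def ZnPerp (n : ℕ) : Set (ℝ × Td) :=
  {q | ∀ z ∈ Zn n, ((q.1 * z.1 : ℝ) : AddCircle (1 : ℝ)) - z.2 q.2 = 0}

/-- Chabauty convergence of a sequence of subsets (closed subgroups) of a locally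
compact additive group, via the standard neighborhood basis. -/
def ChabautyTendstoSet {G ι : Type*} [AddGroup G] [TopologicalSpace G]
    (H : ι → Set G) (l : Filter ι) (L : Set G) : Prop :=
  ∀ K : Set G, IsCompact K → ∀ W ∈ nhds (0 : G), ∀ᶠ i in l,
    H i ∩ K ⊆ W + L ∧ L ∩ K ⊆ W + H i


namespace AddCircle

variable {p : ℝ}

theorem eventually_coe_mem_imp_eq_zero (hp : 0 < p) {S : Set (AddCircle p)} (hS : S.Finite) :
    ∀ᶠ x : ℝ in nhds 0, (x : AddCircle p) ∈ S → x = 0 := by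
  have hS' : IsOpen (QuotientAddGroup.mk ⁻¹' (S \ {0})ᶜ : Set ℝ) :=
    hS.sdiff.isClosed.isOpen_compl.preimage continuous_quot_mk
  -- near 0, `x` misses the finitely many nonzero points of `S`, and `↑` is injective on `(-p, p)`
  filter_upwards [hS'.mem_nhds (by simp), Ioo_mem_nhds (neg_neg_of_pos hp) hp]
    with x hxS hx hxmem
  have hx0 : (x : AddCircle p) = 0 := by simpa [hxmem] using hxS
  obtain ⟨m, rfl⟩ := (coe_eq_zero_iff p).1 hx0
  rw [zsmul_eq_mul] at hx ⊢
  have hlt : (m : ℝ) < 1 := lt_of_mul_lt_mul_right (by simpa using hx.2) hp.le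
  have hgt : (-1 : ℝ) < m := lt_of_mul_lt_mul_right (by simpa using hx.1) hp.le
  have hm : m = 0 := by norm_cast at hlt hgt; omega
  simp [hm]

end AddCircle

theorem ChabautyTendstoSet.singleton_zero {G ι : Type*} [AddGroup G] [TopologicalSpace G]
    {H : ι → Set G} {l : Filter ι} (h0 : ∀ i, (0 : G) ∈ H i)
    (h : ∀ K : Set G, IsCompact K → ∀ᶠ i in l, H i ∩ K ⊆ {0}) :
    ChabautyTendstoSet H l {0} := by
  intro K hK W hW
  filter_upwards [h K hK] with i hi
  have h0W : (0 : G) ∈ W := mem_of_mem_nhds hW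
  refine ⟨hi.trans ?_, ?_⟩
  · rintro _ rfl
    exact ⟨0, h0W, 0, rfl, zero_add 0⟩
  · rintro _ ⟨rfl, -⟩
    exact ⟨0, h0W, 0, h0 i, zero_add 0⟩

theorem Td.toCircle_ofCircle (x : AddCircle (1 : ℝ)) : Td.toCircle (Td.ofCircle x) = x := rfl

noncomputable def dualPairing (q : ℝ × Td) : ℝ × BohrZ →+ AddCircle (1 : ℝ) where
  toFun z := ((q.1 * z.1 : ℝ) : AddCircle (1 : ℝ)) - z.2 q.2
  map_zero' := by simp
  map_add' z w := by
    simp only [Prod.fst_add, Prod.snd_add, mul_add, AddCircle.coe_add,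
      ContinuousAddMonoidHom.add_apply]
    abel

theorem Zn_eq_zmultiples (n : ℕ) :
    Zn n = AddSubgroup.zmultiples (((n : ℝ)⁻¹, idChar) : ℝ × BohrZ) := by
  ext z
  simp [Zn, AddSubgroup.mem_zmultiples_iff, eq_comm]

theorem mem_ZnPerp_iff {n : ℕ} {r : ℝ} {t : Td} :
    (r, t) ∈ ZnPerp n ↔ ((r / n : ℝ) : AddCircle (1 : ℝ)) = Td.toCircle t := by
  change (∀ z ∈ Zn n, dualPairing (r, t) z = 0) ↔ _
  rw [Zn_eq_zmultiples, ← sub_eq_zero, div_eq_mul_inv]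
  exact AddSubgroup.zmultiples_le (H := (dualPairing (r, t)).ker)

theorem zero_mem_ZnPerp (n : ℕ) : (0 : ℝ × Td) ∈ ZnPerp n :=
  mem_ZnPerp_iff.2 (by simp)

theorem eventually_ZnPerp_inter_subset_zero {K : Set (ℝ × Td)} (hK : IsCompact K) :
    ∀ᶠ n in atTop, ZnPerp n ∩ K ⊆ {0} := by
  obtain ⟨C, hC⟩ := (hK.image continuous_fst).isBounded.exists_norm_le
  have hS : (Td.toCircle '' (Prod.snd '' K)).Finite :=
    (hK.image continuous_snd).finite_of_discrete.image _
  obtain ⟨ε, hε, hball⟩ :=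
    Metric.eventually_nhds_iff.1 (AddCircle.eventually_coe_mem_imp_eq_zero one_pos hS)
  filter_upwards [eventually_gt_atTop 0,
    (tendsto_const_div_atTop_nhds_zero_nat C).eventually (gt_mem_nhds hε)] with n hn hCn
  rintro ⟨r, t⟩ ⟨hmem, hrt⟩
  have hrC : |r| ≤ C := hC r ⟨(r, t), hrt, rfl⟩
  have hrn : r / n = 0 := by
    refine hball ?_ (mem_ZnPerp_iff.1 hmem ▸ ⟨t, ⟨(r, t), hrt, rfl⟩, rfl⟩)
    calc dist (r / n) 0 = |r| / n := by simp
      _ ≤ C / n := by gcongr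
      _ < ε := hCn
  have hr : r = 0 := by simpa [hn.ne'] using hrn
  have ht : Td.toCircle t = 0 := by rw [← mem_ZnPerp_iff.1 hmem, hrn]; rfl
  exact Prod.ext hr ht

/-- `(r, s̄) ∈ Z_n^⊥` iff `r/n - s ∈ ℤ`, and the sequence of annihilators `(Z_n^⊥)`
converges to the trivial subgroup `{0}` in the Chabauty topology on `ℝ × 𝕋_d`. -/
theorem ZnPerp_mem_iff_and_tendsto_trivial :
    (∀ n : ℕ, 0 < n → ∀ r s : ℝ,
      ((r, Td.ofCircle (s : AddCircle (1 : ℝ))) ∈ ZnPerp n ↔ ∃ m : ℤ, r / n - s = m)) ∧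
    ChabautyTendstoSet ZnPerp atTop ({0} : Set (ℝ × Td)) := by
  refine ⟨fun n _ r s => ?_, .singleton_zero zero_mem_ZnPerp
    fun _ => eventually_ZnPerp_inter_subset_zero⟩
  rw [mem_ZnPerp_iff, Td.toCircle_ofCircle, ← sub_eq_zero, ← AddCircle.coe_sub,
    AddCircle.coe_eq_zero_iff]
  simp [eq_comm]
end
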